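/- Communication lemma: if σ ∈ (σ₁ ∥ σ₂), ⟦α⟧σ₁ = σ₁' and ⟦ᾱ⟧σ₂ = σ₂' (both successful), where ᾱ is the dual action (the dual of c!d is c?d and vice versa), then σ ∈ (σ₁' ∥ σ₂'). -/
import Mathlib


inductive Own | pub | pri
deriving DecidableEq

abbrev Chan := ℕ
abbrev Resource := Chan → Option Own

def Resource.dom (σ : Resource) : Set Chan := {c | (σ c).isSome}

def upd (σ : Resource) (c : Chan) (o : Own) : Resource :=
  fun d => if d = c then some o else σ d

/-- σ ∈ (σ₁ ∥ σ₂): parallel separation. -/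
def PSep (σ σ₁ σ₂ : Resource) : Prop :=
  σ.dom = σ₁.dom ∪ σ₂.dom ∧
  (∀ c, σ₁ c = some Own.pri → σ c = some Own.pri ∧ c ∉ σ₂.dom) ∧
  (∀ c, σ₂ c = some Own.pri → σ c = some Own.pri ∧ c ∉ σ₁.dom)

/-- public lifting σ̂ -/
def pubLift (σ : Resource) : Resource := fun c => (σ c).map fun _ => Own.pub

inductive Act
  | send (c d : Chan)
  | recv (c d : Chan)
  | alloc (c : Chan)
  | tau
  | fault
deriving DecidableEq

inductive ARes | ok (σ : Resource) | top | bot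

def act : Act → Resource → ARes
  | .send c d, σ =>
      if (σ c).isSome ∧ (σ d).isSome then
        if σ c = some Own.pub then .ok (upd σ d Own.pub) else .bot
      else .top
  | .recv c d, σ =>
      if (σ c).isSome then
        if σ c = some Own.pub ∧ σ d ≠ some Own.pri then .ok (upd σ d Own.pub) else .bot
      else .top
  | .alloc c, σ => if (σ c).isSome then .bot else .ok (upd σ c Own.pri)
  | .tau, σ => .ok σ
  | .fault, _ => .top

def dual : Act → Option Act
  | .send c d => some (.recv c d)
  | .recv c d => some (.send c d)
  | _ => none


lemma dom_upd (σ : Resource) (d : Chan) (o : Own) :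
    (upd σ d o).dom = σ.dom ∪ {d} := by
  ext c
  simp [Resource.dom, upd]
  by_cases h : c = d <;> simp [h]

lemma psep_upd_pub (σ σ₁ σ₂ : Resource) (d : Chan)
    (hsep : PSep σ σ₁ σ₂) (hd : d ∈ σ.dom) :
    PSep σ (upd σ₁ d Own.pub) (upd σ₂ d Own.pub) := by
  obtain ⟨hdom, h1, h2⟩ := hsep
  refine ⟨?_, ?_, ?_⟩
  · rw [dom_upd, dom_upd, hdom]
    rw [hdom] at hd
    have : σ₁.dom ∪ {d} ∪ (σ₂.dom ∪ {d}) = σ₁.dom ∪ σ₂.dom ∪ {d} := by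
      ext c
      simp only [Set.mem_union, Set.mem_singleton_iff]
      tauto
    rw [this, Set.union_eq_self_of_subset_right (Set.singleton_subset_iff.mpr hd)]
  · intro c hc
    have hcd : c ≠ d := by
      intro h; subst h; simp [upd] at hc
    simp [upd, hcd] at hc
    obtain ⟨ha, hb⟩ := h1 c hc
    refine ⟨ha, ?_⟩
    rw [dom_upd]; simp [hcd]; exact hb
  · intro c hc
    have hcd : c ≠ d := by
      intro h; subst h; simp [upd] at hc
    simp [upd, hcd] at hc
    obtain ⟨ha, hb⟩ := h2 c hc
    refine ⟨ha, ?_⟩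
    rw [dom_upd]; simp [hcd]; exact hb

theorem communication (α β : Act) (σ σ₁ σ₂ σ₁' σ₂' : Resource)
    (hdual : dual α = some β)
    (hsep : PSep σ σ₁ σ₂)
    (h₁ : act α σ₁ = ARes.ok σ₁') (h₂ : act β σ₂ = ARes.ok σ₂') :
    PSep σ σ₁' σ₂' := by
  cases α <;> simp [dual] at hdual <;> subst hdual
  · -- send c d, recv c d
    rename_i c d
    simp only [act] at h₁ h₂
    split at h₁
    · split at h₁
      · split at h₂
        · split at h₂
          · rename_i hds hcp hcs hrec
            injection h₁ with e1; injection h₂ with e2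
            subst e1; subst e2
            apply psep_upd_pub _ _ _ _ hsep
            have : d ∈ σ₁.dom := hds.2
            rw [hsep.1]; exact Or.inl this
          · exact absurd h₂ (by simp)
        · exact absurd h₂ (by simp)
      · exact absurd h₁ (by simp)
    · exact absurd h₁ (by simp)
  · -- recv c d, send c d
    rename_i c d
    simp only [act] at h₁ h₂
    split at h₁
    · split at h₁
      · split at h₂
        · split at h₂
          · rename_i h hrec hds hcs
            injection h₁ with e1; injection h₂ with e2
            subst e1; subst e2
            apply psep_upd_pub _ _ _ _ hsep
            have : d ∈ σ₂.dom := hds.2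
            rw [hsep.1]; exact Or.inr this
          · exact absurd h₂ (by simp)
        · exact absurd h₂ (by simp)
      · exact absurd h₁ (by simp)
    · exact absurd h₁ (by simp)
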